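/- Let μ_K, for K ranging over finite subsets of an index set T, be a consistent family of probability measures on products ∏_{t∈K} Mₜ of standard Borel spaces (i.e., μ_{K'}(A × ∏_{t∈K'∖K} Mₜ) = μ_K(A) for K ⊆ K'). Then there exists a unique probability measure μ on (∏_{t∈T} Mₜ, ⊗_{t∈T} 𝒜ₜ) whose marginal on each finite K is μ_K. -/

import Mathlib

open MeasureTheory Set
open scoped ENNReal

/-- Projection of the full product onto the coordinates in the finite set `K`. -/
def projT {ι : Type*} {M : ι → Type*} (K : Finset ι) (x : ∀ t, M t) (t : K) : M t := x t

/-- Projection between finite products, for `K ⊆ K'`. -/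
def projKK' {ι : Type*} {M : ι → Type*} {K K' : Finset ι} (h : K ⊆ K')
    (x : ∀ t : K', M t) (t : K) : M t := x ⟨t.1, h t.2⟩

namespace KolmogorovAux

variable {ι : Type*} {M : ι → Type*} [∀ t, MeasurableSpace (M t)]

open scoped Classical in
/-- The content associated to the projective family. -/
noncomputable def kContent (μ : ∀ K : Finset ι, Measure (∀ t : K, M t))
    (A : Set (∀ t, M t)) : ℝ≥0∞ :=
  if hA : A ∈ measurableCylinders M then
    μ (measurableCylinders.finset hA) (measurableCylinders.set hA) else ∞

variable {μ : ∀ K : Finset ι, Measure (∀ t : K, M t)}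

lemma kContent_cylinder (hproj : IsProjectiveMeasureFamily μ) {K : Finset ι}
    {S : Set (∀ t : K, M t)} (hS : MeasurableSet S) :
    kContent μ (cylinder K S) = μ K S := by
  have h : cylinder K S ∈ measurableCylinders M := cylinder_mem_measurableCylinders _ _ hS
  rw [kContent, dif_pos h]
  exact hproj.congr_cylinder (measurableCylinders.measurableSet h) hS
    (measurableCylinders.eq_cylinder h).symm

lemma kContent_of_not_mem {A : Set (∀ t, M t)} (hA : A ∉ measurableCylinders M) :
    kContent μ A = ∞ := by
  rw [kContent, dif_neg hA]

lemma kContent_empty (hproj : IsProjectiveMeasureFamily μ) : kContent μ (∅ : Set (∀ t, M t)) = 0 := by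
  rw [← cylinder_empty (∅ : Finset ι), kContent_cylinder hproj MeasurableSet.empty, measure_empty]

lemma cylinder_eq_of_subset {J K : Finset ι} (hJK : J ⊆ K) (S : Set (∀ t : J, M t)) :
    cylinder J S = cylinder K (Finset.restrict₂ hJK ⁻¹' S) := by
  ext x
  simp only [cylinder, Set.mem_preimage]
  have : Finset.restrict₂ hJK (K.restrict x) = J.restrict x := rfl
  rw [this]

lemma exists_common_rep {A B : Set (∀ t, M t)} (hA : A ∈ measurableCylinders M)
    (hB : B ∈ measurableCylinders M) :
    ∃ (K : Finset ι) (S T : Set (∀ t : K, M t)), MeasurableSet S ∧ MeasurableSet T ∧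
      A = cylinder K S ∧ B = cylinder K T := by
  classical
  obtain ⟨K₁, S₁, hS₁, rfl⟩ := (mem_measurableCylinders A).mp hA
  obtain ⟨K₂, S₂, hS₂, rfl⟩ := (mem_measurableCylinders B).mp hB
  exact ⟨K₁ ∪ K₂, Finset.restrict₂ Finset.subset_union_left ⁻¹' S₁,
    Finset.restrict₂ Finset.subset_union_right ⁻¹' S₂,
    (Finset.measurable_restrict₂ _) hS₁, (Finset.measurable_restrict₂ _) hS₂,
    cylinder_eq_of_subset Finset.subset_union_left S₁,
    cylinder_eq_of_subset Finset.subset_union_right S₂⟩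

lemma restrict_surjective (hne : ∀ t, Nonempty (M t)) (K : Finset ι) :
    Function.Surjective (K.restrict (π := M)) := by
  classical
  intro y
  refine ⟨fun t => if h : t ∈ K then y ⟨t, h⟩ else (hne t).some, funext fun t => ?_⟩
  simp [Finset.restrict, t.2]

lemma subset_of_cylinder_subset (hne : ∀ t, Nonempty (M t)) {K : Finset ι}
    {S T : Set (∀ t : K, M t)} (h : cylinder K S ⊆ cylinder K T) : S ⊆ T := by
  intro y hy
  obtain ⟨x, rfl⟩ := restrict_surjective hne K y
  exact h hy

lemma kContent_mono (hproj : IsProjectiveMeasureFamily μ) (hne : ∀ t, Nonempty (M t))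
    {A B : Set (∀ t, M t)} (hA : A ∈ measurableCylinders M) (hB : B ∈ measurableCylinders M)
    (hAB : A ⊆ B) : kContent μ A ≤ kContent μ B := by
  obtain ⟨K, S, T, hS, hT, rfl, rfl⟩ := exists_common_rep hA hB
  rw [kContent_cylinder hproj hS, kContent_cylinder hproj hT]
  exact measure_mono (subset_of_cylinder_subset hne hAB)

lemma kContent_union (hproj : IsProjectiveMeasureFamily μ) (hne : ∀ t, Nonempty (M t))
    {A B : Set (∀ t, M t)} (hA : A ∈ measurableCylinders M) (hB : B ∈ measurableCylinders M)
    (hdisj : Disjoint A B) : kContent μ (A ∪ B) = kContent μ A + kContent μ B := by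
  obtain ⟨K, S, T, hS, hT, rfl, rfl⟩ := exists_common_rep hA hB
  rw [union_cylinder_same, kContent_cylinder hproj (hS.union hT), kContent_cylinder hproj hS,
    kContent_cylinder hproj hT]
  refine measure_union ?_ hT
  refine Set.disjoint_left.mpr fun y hyS hyT => ?_
  obtain ⟨x, rfl⟩ := restrict_surjective hne K y
  exact Set.disjoint_left.mp hdisj hyS hyT

lemma kContent_union_le (hproj : IsProjectiveMeasureFamily μ) (hne : ∀ t, Nonempty (M t))
    {A B : Set (∀ t, M t)} (hA : A ∈ measurableCylinders M) (hB : B ∈ measurableCylinders M) :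
    kContent μ (A ∪ B) ≤ kContent μ A + kContent μ B := by
  obtain ⟨K, S, T, hS, hT, rfl, rfl⟩ := exists_common_rep hA hB
  rw [union_cylinder_same, kContent_cylinder hproj (hS.union hT), kContent_cylinder hproj hS,
    kContent_cylinder hproj hT]
  exact measure_union_le S T

lemma biUnion_range_mem {f : ℕ → Set (∀ t, M t)} (hf : ∀ k, f k ∈ measurableCylinders M)
    (n : ℕ) : (⋃ k ∈ Finset.range n, f k) ∈ measurableCylinders M := by
  classical
  induction n with
  | zero => simpa using empty_mem_measurableCylinders M
  | succ n ih =>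
      rw [Finset.range_add_one]
      simp only [Finset.mem_insert, Set.iUnion_iUnion_eq_or_left]
      exact union_mem_measurableCylinders (hf n) ih

lemma kContent_biUnion_le (hproj : IsProjectiveMeasureFamily μ) (hne : ∀ t, Nonempty (M t))
    {f : ℕ → Set (∀ t, M t)} (hf : ∀ k, f k ∈ measurableCylinders M) (n : ℕ) :
    kContent μ (⋃ k ∈ Finset.range n, f k) ≤ ∑ k ∈ Finset.range n, kContent μ (f k) := by
  classical
  induction n with
  | zero => simpa using kContent_empty hproj
  | succ n ih =>
      rw [Finset.range_add_one]
      simp only [Finset.mem_insert, Set.iUnion_iUnion_eq_or_left, Finset.sum_insert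
        Finset.notMem_range_self]
      exact (kContent_union_le hproj hne (hf n) (biUnion_range_mem hf n)).trans
        (add_le_add_right ih _)

lemma geom_bound (ε : ℝ≥0∞) (m : ℕ) :
    ∑ k ∈ Finset.range m, ε / 2 ^ (k + 2) ≤ ε / 2 := by
  have h1 : ∀ k, ε / 2 ^ (k + 2) = ε * 2⁻¹ ^ 2 * 2⁻¹ ^ k := by
    intro k
    rw [div_eq_mul_inv, pow_add, ENNReal.mul_inv (Or.inl (pow_ne_zero _ two_ne_zero))
      (Or.inr (pow_ne_zero _ two_ne_zero)), ENNReal.inv_pow, ENNReal.inv_pow,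
      mul_comm ((2:ℝ≥0∞)⁻¹ ^ k), ← mul_assoc]
  calc ∑ k ∈ Finset.range m, ε / 2 ^ (k + 2)
      = ε * 2⁻¹ ^ 2 * ∑ k ∈ Finset.range m, 2⁻¹ ^ k := by
        rw [Finset.mul_sum]; exact Finset.sum_congr rfl fun k _ => h1 k
    _ ≤ ε * 2⁻¹ ^ 2 * ∑' k : ℕ, 2⁻¹ ^ k := by
        gcongr; exact ENNReal.sum_le_tsum _
    _ = ε * 2⁻¹ * (2⁻¹ * 2) := by
        rw [ENNReal.tsum_geometric, ENNReal.one_sub_inv_two, inv_inv, pow_two, ← mul_assoc,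
          mul_assoc]
    _ = ε / 2 := by
        rw [ENNReal.inv_mul_cancel two_ne_zero ENNReal.ofNat_ne_top, mul_one, div_eq_mul_inv]


lemma exists_emb_Icc (α : Type*) [MeasurableSpace α] [StandardBorelSpace α] :
    ∃ f : α → Set.Icc (-1 : ℝ) 1, MeasurableEmbedding f := by
  obtain ⟨f, hf⟩ := exists_measurableEmbedding_real α
  let e := orderIsoIooNegOneOne ℝ
  let r : ℝ → Set.Icc (-1 : ℝ) 1 := fun x => ⟨(e x : ℝ), Set.Ioo_subset_Icc_self (e x).2⟩
  have hmono : Monotone fun x : ℝ => (e x : ℝ) := fun a b hab => by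
    exact_mod_cast e.monotone hab
  have hrm : Measurable r := Measurable.subtype_mk hmono.measurable
  have hri : Function.Injective r := fun a b hab => by
    exact e.injective (Subtype.ext (by simpa [r] using congrArg Subtype.val hab))
  exact ⟨r ∘ f, (hrm.measurableEmbedding hri).comp hf⟩

variable [∀ t, StandardBorelSpace (M t)]

lemma nonempty_iInter (hproj : IsProjectiveMeasureFamily μ)
    (hprob : ∀ K, IsProbabilityMeasure (μ K)) (hne : ∀ t, Nonempty (M t))
    (R : ℕ → Set (∀ t, M t)) (hR : ∀ n, R n ∈ measurableCylinders M) (hanti : Antitone R)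
    {ε : ℝ≥0∞} (hε : 0 < ε) (hcont : ∀ n, ε ≤ kContent μ (R n)) :
    (⋂ n, R n).Nonempty := by
  classical
  choose Jn Sn hSmeas hReq using fun n => (mem_measurableCylinders (R n)).mp (hR n)
  obtain ⟨h, hemb⟩ : ∃ h : ∀ t, M t → Set.Icc (-1 : ℝ) 1, ∀ t, MeasurableEmbedding (h t) := by
    have := fun t => exists_emb_Icc (M t)
    exact ⟨fun t => (this t).choose, fun t => (this t).choose_spec⟩
  set g : ∀ K : Finset ι, (∀ t : K, M t) → (∀ _ : K, Set.Icc (-1 : ℝ) 1) :=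
    fun K x i => h i (x i) with hg
  have gmeas : ∀ K, Measurable (g K) :=
    fun K => measurable_pi_lambda _ fun i => (hemb i).measurable.comp (measurable_pi_apply i)
  have ginj : ∀ K, Function.Injective (g K) :=
    fun K a b hab => funext fun i => (hemb i).injective (congrFun hab i)
  have gemb : ∀ K, MeasurableEmbedding (g K) :=
    fun K => (gmeas K).measurableEmbedding (ginj K)
  have hεtop : ε ≠ ∞ := by
    have h1 : kContent μ (R 0) ≤ 1 := by
      rw [hReq 0, kContent_cylinder hproj (hSmeas 0)]
      haveI := hprob (Jn 0)
      exact prob_le_one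
    exact ne_top_of_le_ne_top ENNReal.one_ne_top ((hcont 0).trans h1)
  -- regularity: compact approximations
  have hreg : ∀ n, ∃ D : Set (∀ _ : Jn n, Set.Icc (-1 : ℝ) 1), IsCompact D ∧
      D ⊆ g (Jn n) '' Sn n ∧ μ (Jn n) (Sn n \ g (Jn n) ⁻¹' D) < ε / 2 ^ (n + 2) := by
    intro n
    haveI := hprob (Jn n)
    set ν := (μ (Jn n)).map (g (Jn n)) with hν
    haveI : IsProbabilityMeasure ν := Measure.isProbabilityMeasure_map (gmeas (Jn n)).aemeasurable
    have himg : MeasurableSet (g (Jn n) '' Sn n) :=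
      (gemb (Jn n)).measurableSet_image.mpr (hSmeas n)
    have hd : ε / 2 ^ (n + 2) ≠ 0 :=
      ENNReal.div_ne_zero.mpr ⟨hε.ne', ENNReal.pow_ne_top ENNReal.ofNat_ne_top⟩
    obtain ⟨F, hFsub, hFclosed, hFlt⟩ := himg.exists_isClosed_diff_lt
      (measure_ne_top ν _) hd
    refine ⟨F, hFclosed.isCompact, hFsub, ?_⟩
    have heq : Sn n \ g (Jn n) ⁻¹' F = g (Jn n) ⁻¹' (g (Jn n) '' Sn n \ F) := by
      rw [Set.preimage_diff, (ginj (Jn n)).preimage_image]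
    rw [heq, ← Measure.map_apply (gmeas (Jn n)) (himg.diff hFclosed.measurableSet)]
    exact hFlt
  choose D hDcomp hDsub hDlt using hreg
  set C : ∀ n, Set (∀ t : Jn n, M t) := fun n => g (Jn n) ⁻¹' D n with hCdef
  have hCmeas : ∀ n, MeasurableSet (C n) :=
    fun n => (gmeas (Jn n)) (hDcomp n).isClosed.measurableSet
  have hCS : ∀ n, C n ⊆ Sn n := by
    intro n x hx
    obtain ⟨y, hyS, hyx⟩ := hDsub n hx
    rwa [← ginj (Jn n) hyx]
  -- the sets B n
  set B : ℕ → Set (∀ t, M t) := fun n => ⋂ k ∈ Finset.range (n + 1), cylinder (Jn k) (C k)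
    with hBdef
  have hBsucc : ∀ n, B (n + 1) = cylinder (Jn (n + 1)) (C (n + 1)) ∩ B n := by
    intro n
    simp only [hBdef]
    rw [show Finset.range (n + 1 + 1) = insert (n + 1) (Finset.range (n + 1)) from
      Finset.range_add_one, Finset.set_biInter_insert]
  have hB0 : B 0 = cylinder (Jn 0) (C 0) := by
    simp only [hBdef]; simp
  have hBmc : ∀ n, B n ∈ measurableCylinders M := by
    intro n
    induction n with
    | zero => rw [hB0]; exact cylinder_mem_measurableCylinders _ _ (hCmeas 0)
    | succ n ih =>
        rw [hBsucc]
        exact inter_mem_measurableCylinders (cylinder_mem_measurableCylinders _ _ (hCmeas _)) ih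
  have hBanti : Antitone B := antitone_nat_of_succ_le fun n => by
    rw [hBsucc]; exact Set.inter_subset_right
  have hBcyl : ∀ n k, k ≤ n → B n ⊆ cylinder (Jn k) (C k) := by
    intro n k hk x hx
    simp only [hBdef] at hx
    exact Set.mem_iInter₂.mp hx k (Finset.mem_range.mpr (Nat.lt_succ_of_le hk))
  have hBsubR : ∀ n, B n ⊆ R n := by
    intro n x hx
    have h1 : x ∈ cylinder (Jn n) (C n) := hBcyl n n le_rfl hx
    rw [hReq n]
    exact hCS n h1
  -- lower bound on the content of B n
  have hdiffsub : ∀ n, R n \ B n ⊆ ⋃ k ∈ Finset.range (n + 1),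
      (R k \ cylinder (Jn k) (C k)) := by
    intro n x hx
    simp only [hBdef] at hx
    obtain ⟨hxR, hxB⟩ := hx
    simp only [Set.mem_iInter, not_forall] at hxB
    obtain ⟨k, hk, hxk⟩ := hxB
    exact Set.mem_biUnion hk ⟨hanti (Nat.le_of_lt_succ (Finset.mem_range.mp hk)) hxR, hxk⟩
  have hdiffmc : ∀ k, R k \ cylinder (Jn k) (C k) ∈ measurableCylinders M := fun k =>
    diff_mem_measurableCylinders (hR k) (cylinder_mem_measurableCylinders _ _ (hCmeas k))
  have hcontdiff : ∀ k, kContent μ (R k \ cylinder (Jn k) (C k)) ≤ ε / 2 ^ (k + 2) := by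
    intro k
    have : R k \ cylinder (Jn k) (C k) = cylinder (Jn k) (Sn k \ C k) := by
      rw [hReq k, diff_cylinder_same]
    rw [this, kContent_cylinder hproj ((hSmeas k).diff (hCmeas k))]
    exact (hDlt k).le
  have hBn_lb : ∀ n, ε / 2 ≤ kContent μ (B n) := by
    intro n
    have hRBsplit : kContent μ (R n) ≤ kContent μ (B n) + kContent μ (R n \ B n) := by
      refine le_trans (kContent_mono hproj hne (hR n) (union_mem_measurableCylinders (hBmc n)
        (diff_mem_measurableCylinders (hR n) (hBmc n))) ?_) ?_
      · intro x hx
        by_cases hxB : x ∈ B n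
        · exact Or.inl hxB
        · exact Or.inr ⟨hx, hxB⟩
      · exact kContent_union_le hproj hne (hBmc n) (diff_mem_measurableCylinders (hR n) (hBmc n))
    have hRnB : kContent μ (R n \ B n) ≤ ε / 2 := by
      refine le_trans (kContent_mono hproj hne (diff_mem_measurableCylinders (hR n) (hBmc n))
        (biUnion_range_mem (f := fun k => R k \ cylinder (Jn k) (C k)) hdiffmc (n + 1)) ?_) ?_
      · exact hdiffsub n
      · refine le_trans (kContent_biUnion_le hproj hne hdiffmc (n + 1)) ?_
        refine le_trans (Finset.sum_le_sum fun k _ => hcontdiff k) ?_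
        exact geom_bound ε (n + 1)
    have : ε ≤ kContent μ (B n) + ε / 2 :=
      (hcont n).trans (hRBsplit.trans (add_le_add_right hRnB _))
    calc ε / 2 = ε - ε / 2 := (ENNReal.sub_half hεtop).symm
      _ ≤ kContent μ (B n) := tsub_le_iff_right.mpr this
  have hBne : ∀ n, (B n).Nonempty := by
    intro n
    rw [Set.nonempty_iff_ne_empty]
    intro hBe
    have := hBn_lb n
    rw [hBe, kContent_empty hproj] at this
    have hε2 : ε / 2 = 0 := le_antisymm this zero_le
    rw [ENNReal.div_eq_zero_iff] at hε2
    rcases hε2 with h0 | h2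
    · exact hε.ne' h0
    · exact ENNReal.ofNat_ne_top h2
  choose x hx using hBne
  -- move to the compact product space
  set B' : ℕ → Set (∀ _ : ι, Set.Icc (-1 : ℝ) 1) :=
    fun n => ⋂ k ∈ Finset.range (n + 1), cylinder (Jn k) (D k) with hB'def
  set F : (∀ t, M t) → (∀ _ : ι, Set.Icc (-1 : ℝ) 1) := fun z t => h t (z t) with hF
  have hgF : ∀ (K : Finset ι) (z : ∀ t, M t), K.restrict (F z) = g K (K.restrict z) := by
    intro K z; rfl
  have hFB' : ∀ n, F (x n) ∈ B' n := by
    intro n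
    simp only [hB'def]
    refine Set.mem_iInter₂.mpr fun k hk => ?_
    have hxk : x n ∈ cylinder (Jn k) (C k) :=
      hBcyl n k (Nat.le_of_lt_succ (Finset.mem_range.mp hk)) (hx n)
    rw [mem_cylinder] at hxk ⊢
    rw [hgF]
    exact hxk
  have hB'closed : ∀ n, IsClosed (B' n) := by
    intro n
    refine isClosed_biInter fun k _ => IsClosed.preimage ?_ (hDcomp k).isClosed
    exact continuous_pi fun i => continuous_apply _
  have hB'anti : ∀ n, B' (n + 1) ⊆ B' n := by
    intro n y hy
    simp only [hB'def] at hy ⊢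
    rw [Set.mem_iInter₂] at hy ⊢
    intro k hk
    exact hy k (Finset.mem_range.mpr (Nat.lt_succ_of_lt (Finset.mem_range.mp hk)))
  obtain ⟨y, hy⟩ := IsCompact.nonempty_iInter_of_sequence_nonempty_isCompact_isClosed B'
    hB'anti (fun n => ⟨F (x n), hFB' n⟩) (hB'closed 0).isCompact hB'closed
  have hyk : ∀ k, (Jn k).restrict y ∈ D k := by
    intro k
    have h1 : y ∈ B' k := Set.mem_iInter.mp hy k
    simp only [hB'def] at h1
    exact Set.mem_iInter₂.mp h1 k (Finset.self_mem_range_succ k)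
  -- construct the limit point
  set z : ∀ t, M t := fun t =>
    if hyt : y t ∈ Set.range (h t) then hyt.choose else (hne t).some with hz
  have hzC : ∀ k, (Jn k).restrict z ∈ C k := by
    intro k
    obtain ⟨w, hwS, hweq⟩ := hDsub k (hyk k)
    have hyrange : ∀ t : Jn k, y t ∈ Set.range (h t) :=
      fun t => ⟨w t, congrFun hweq t⟩
    have hgz : g (Jn k) ((Jn k).restrict z) = (Jn k).restrict y := by
      funext t
      have hr := hyrange t
      show h t (z t) = y t
      simp only [hz]
      simp only [dif_pos hr]
      exact hr.choose_spec
    show g (Jn k) ((Jn k).restrict z) ∈ D k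
    rw [hgz]
    exact hyk k
  refine ⟨z, Set.mem_iInter.mpr fun n => ?_⟩
  rw [hReq n]
  exact hCS n (hzC n)

lemma kContent_sigma_subadd (hproj : IsProjectiveMeasureFamily μ)
    (hprob : ∀ K, IsProbabilityMeasure (μ K)) (hne : ∀ t, Nonempty (M t))
    {A : Set (∀ t, M t)} (hA : A ∈ measurableCylinders M) (f : ℕ → Set (∀ t, M t))
    (hf : ∀ n, f n ∈ measurableCylinders M) (hcov : A ⊆ ⋃ n, f n) :
    kContent μ A ≤ ∑' n, kContent μ (f n) := by
  classical
  set R : ℕ → Set (∀ t, M t) := fun n => A \ ⋃ k ∈ Finset.range n, f k with hRdef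
  have hRmc : ∀ n, R n ∈ measurableCylinders M :=
    fun n => diff_mem_measurableCylinders hA (biUnion_range_mem hf n)
  have hRanti : Antitone R := by
    intro m n hnm x hx
    simp only [hRdef] at hx ⊢
    refine ⟨hx.1, fun hmem => hx.2 ?_⟩
    obtain ⟨k, hk, hxk⟩ := Set.mem_iUnion₂.mp hmem
    exact Set.mem_biUnion (Finset.mem_range.mpr ((Finset.mem_range.mp hk).trans_le hnm)) hxk
  have hRempty : ⋂ n, R n = ∅ := by
    ext x
    simp only [Set.mem_iInter, Set.mem_empty_iff_false, iff_false]
    intro hall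
    have hxA : x ∈ A := (hall 0).1
    obtain ⟨m, hm⟩ := Set.mem_iUnion.mp (hcov hxA)
    exact (hall (m + 1)).2 (Set.mem_biUnion (Finset.self_mem_range_succ m) hm)
  have key : ∀ n, kContent μ A ≤ (∑' k, kContent μ (f k)) + kContent μ (R n) := by
    intro n
    have hsub : A ⊆ (⋃ k ∈ Finset.range n, f k) ∪ R n := by
      intro x hx
      by_cases hmem : x ∈ ⋃ k ∈ Finset.range n, f k
      · exact Or.inl hmem
      · exact Or.inr ⟨hx, hmem⟩
    calc kContent μ A ≤ kContent μ ((⋃ k ∈ Finset.range n, f k) ∪ R n) :=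
          kContent_mono hproj hne hA
            (union_mem_measurableCylinders (biUnion_range_mem hf n) (hRmc n)) hsub
      _ ≤ kContent μ (⋃ k ∈ Finset.range n, f k) + kContent μ (R n) :=
          kContent_union_le hproj hne (biUnion_range_mem hf n) (hRmc n)
      _ ≤ (∑ k ∈ Finset.range n, kContent μ (f k)) + kContent μ (R n) :=
          add_le_add_left (kContent_biUnion_le hproj hne hf n) _
      _ ≤ (∑' k, kContent μ (f k)) + kContent μ (R n) :=
          add_le_add_left (ENNReal.sum_le_tsum _) _
  -- the contents of R n become arbitrarily small
  have hsmall : ∀ ε : ℝ≥0∞, 0 < ε → ∃ n, kContent μ (R n) < ε := by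
    intro ε hε
    by_contra hcon
    push_neg at hcon
    have hnonempty : (⋂ n, R n).Nonempty :=
      nonempty_iInter hproj hprob hne R hRmc hRanti hε hcon
    rw [hRempty] at hnonempty
    exact Set.not_nonempty_empty hnonempty
  refine ENNReal.le_of_forall_pos_le_add fun ε hε _ => ?_
  obtain ⟨n, hn⟩ := hsmall ε (by exact_mod_cast hε)
  exact (key n).trans (add_le_add_right hn.le _)

end KolmogorovAux

open KolmogorovAux in
/-- Kolmogorov extension theorem: a consistent family of probability measures on the
finite products of standard Borel spaces extends to a unique probability measure on the
full product whose marginal on each finite `K` is `μ_K`. -/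
theorem kolmogorov_extension
    {ι : Type*} {M : ι → Type*} [∀ t, MeasurableSpace (M t)] [∀ t, StandardBorelSpace (M t)]
    (μ : ∀ K : Finset ι, Measure (∀ t : K, M t))
    (hprob : ∀ K, IsProbabilityMeasure (μ K))
    (hcons : ∀ (K K' : Finset ι) (h : K ⊆ K') (A : Set (∀ t : K, M t)), MeasurableSet A →
      μ K' (projKK' h ⁻¹' A) = μ K A) :
    ∃! ν : Measure (∀ t, M t), IsProbabilityMeasure ν ∧
      ∀ (K : Finset ι) (A : Set (∀ t : K, M t)), MeasurableSet A →
        ν (projT K ⁻¹' A) = μ K A := by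
  classical
  have hne : ∀ t, Nonempty (M t) := by
    intro t
    by_contra hcon
    rw [not_nonempty_iff] at hcon
    haveI : IsEmpty (∀ s : ({t} : Finset ι), M s) :=
      ⟨fun f => hcon.false (f ⟨t, Finset.mem_singleton_self t⟩)⟩
    haveI := hprob ({t} : Finset ι)
    have h1 : (μ ({t} : Finset ι)) Set.univ = 1 := measure_univ
    rw [Set.univ_eq_empty_iff.mpr (by infer_instance), measure_empty] at h1
    exact zero_ne_one h1
  have hproj : IsProjectiveMeasureFamily μ := by
    intro I J hJI
    refine Measure.ext fun s hs => ?_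
    rw [Measure.map_apply (Finset.measurable_restrict₂ hJI) hs]
    exact (hcons J I hJI s hs).symm
  set P := kContent μ with hP
  have hPempty : P ∅ = 0 := kContent_empty hproj
  set oμ := OuterMeasure.ofFunction P hPempty with hoμ
  have h_eq : ∀ A ∈ measurableCylinders M, oμ A = P A := by
    intro A hA
    refine le_antisymm (OuterMeasure.ofFunction_le A) ?_
    rw [hoμ, OuterMeasure.ofFunction_apply]
    refine le_iInf₂ fun f hf => ?_
    by_cases hfc : ∀ n, f n ∈ measurableCylinders M
    · exact kContent_sigma_subadd hproj hprob hne hA f hfc hf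
    · push_neg at hfc
      obtain ⟨n, hn⟩ := hfc
      calc P A ≤ ∞ := le_top
        _ = P (f n) := (kContent_of_not_mem hn).symm
        _ ≤ ∑' k, P (f k) := ENNReal.le_tsum n
  have hcara : ∀ A ∈ measurableCylinders M, MeasurableSet[oμ.caratheodory] A := by
    intro A hA
    refine OuterMeasure.ofFunction_caratheodory fun t => ?_
    by_cases ht : t ∈ measurableCylinders M
    · have h1 : t ∩ A ∈ measurableCylinders M := inter_mem_measurableCylinders ht hA
      have h2 : t \ A ∈ measurableCylinders M := diff_mem_measurableCylinders ht hA
      have hdisj : Disjoint (t ∩ A) (t \ A) :=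
        disjoint_sdiff_self_right.mono_left Set.inter_subset_right
      have h4 := kContent_union hproj hne h1 h2 hdisj
      rw [Set.inter_union_diff t A] at h4
      exact h4.ge
    · rw [hP, kContent_of_not_mem ht]
      exact le_top
  have hle : MeasurableSpace.pi ≤ oμ.caratheodory := by
    rw [← generateFrom_measurableCylinders]
    exact MeasurableSpace.generateFrom_le hcara
  set ν := oμ.toMeasure hle with hν
  have hν_cyl : ∀ (K : Finset ι) (S : Set (∀ t : K, M t)), MeasurableSet S →
      ν (cylinder K S) = μ K S := by
    intro K S hS
    rw [hν, toMeasure_apply oμ hle (hS.cylinder K)]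
    rw [h_eq _ (cylinder_mem_measurableCylinders _ _ hS)]
    exact kContent_cylinder hproj hS
  have hmarg : ∀ (K : Finset ι) (A : Set (∀ t : K, M t)), MeasurableSet A →
      ν (projT K ⁻¹' A) = μ K A := by
    intro K A hA
    have hpt : projT K ⁻¹' A = cylinder K A := rfl
    rw [hpt, hν_cyl K A hA]
  have hprobν : IsProbabilityMeasure ν := by
    constructor
    have huniv : (Set.univ : Set (∀ t, M t)) = cylinder (∅ : Finset ι) Set.univ :=
      (cylinder_univ (∅ : Finset ι)).symm
    rw [huniv, hν_cyl ∅ Set.univ MeasurableSet.univ]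
    haveI := hprob (∅ : Finset ι)
    exact measure_univ
  haveI : ∀ K, IsFiniteMeasure (μ K) := fun K => by haveI := hprob K; infer_instance
  have hlim : ∀ ρ : Measure (∀ t, M t),
      (∀ (K : Finset ι) (A : Set (∀ t : K, M t)), MeasurableSet A →
        ρ (projT K ⁻¹' A) = μ K A) → IsProjectiveLimit ρ μ := by
    intro ρ hρ K
    refine Measure.ext fun s hs => ?_
    rw [Measure.map_apply (K.measurable_restrict) hs]
    exact hρ K s hs
  exact ⟨ν, ⟨hprobν, hmarg⟩, fun ν' hν' =>
    IsProjectiveLimit.unique (hlim ν' hν'.2) (hlim ν hmarg)⟩
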